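/- arXiv:2501.12926 — 4 statements merged into one kernel-verified Lean document; each statement's English description precedes it below -/
import Mathlib

section
/- Let u : ℝ → ℝ be concave and strictly increasing, with real payoffs satisfying a_θ > b_θ, b_{θ'} > a_{θ'} (pre-transformation) and â_θ > b̂_θ, b̂_{θ'} > â_{θ'} (post-transformation), where b̂_θ ≤ b_θ, â_{θ'} ≥ a_{θ'}, and (min{â_θ, a_θ} - b̂_θ)/(a_θ - b_θ) ≥ (b̂_{θ'} - â_{θ'})/(min{b̂_{θ'}, b_{θ'}} - a_{θ'}). Define μ_u = (u(a_θ) - u(b_θ))/((u(a_θ) - u(b_θ)) + (u(b_{θ'}) - u(a_{θ'}))) and μ̂_u = (u(â_θ) - u(b̂_θ))/((u(â_θ) - u(b̂_θ)) + (u(b̂_{θ'}) - u(â_{θ'}))). Then μ_u ≤ μ̂_u. -/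
/-!
Write `X = u a₀ - u b₀`, `Y = u b₁ - u a₁` for the utility gains before the transformation and
`X̂`, `Ŷ` for those after it, so that `μ_u ≤ μ̂_u` amounts to `X Ŷ ≤ X̂ Y`. Since `u` is concave,
its secant slope over `[b̂₀, min â₀ a₀]`, which lies to the left of `[b₀, a₀]`, dominates the slope
over `[b₀, a₀]`, and monotonicity gives `X ≤ X̂ · (a₀ - b₀) / (min â₀ a₀ - b̂₀)`; symmetrically
`Ŷ ≤ Y · (b̂₁ - â₁) / (min b̂₁ b₁ - a₁)`. The super-actuarial inequality says exactly that the
product of the two length ratios is at most `1`.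
-/

section Slope

variable {𝕜 : Type*} [Field 𝕜] [LinearOrder 𝕜] [IsStrictOrderedRing 𝕜] {f : 𝕜 → 𝕜}

theorem ConcaveOn.slope_le_slope {s : Set 𝕜} (hf : ConcaveOn 𝕜 s f) {x y x' y' : 𝕜}
    (hx : x ∈ s) (hy' : y' ∈ s) (hxx' : x ≤ x') (hyy' : y ≤ y') (hxy : x < y) (hxy' : x' < y') :
    slope f x' y' ≤ slope f x y := by
  have hx's : x' ∈ s := hf.1.ordConnected.out hx hy' ⟨hxx', hxy'.le⟩
  have hys : y ∈ s := hf.1.ordConnected.out hx hy' ⟨hxy.le, hyy'⟩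
  calc slope f x' y' = slope f y' x' := slope_comm f x' y'
    _ ≤ slope f y' x :=
      hf.slope_anti hy' ⟨hx, (hxy.trans_le hyy').ne⟩ ⟨hx's, hxy'.ne⟩ hxx'
    _ = slope f x y' := slope_comm f y' x
    _ ≤ slope f x y :=
      hf.slope_anti hx ⟨hys, hxy.ne'⟩ ⟨hy', (hxy.trans_le hyy').ne'⟩ hyy'

theorem ConcaveOn.sub_le_sub_mul_div (hf : ConcaveOn 𝕜 Set.univ f) (hmono : Monotone f)
    {x y x' m y' : 𝕜} (hx'x : x' ≤ x) (hxy : x < y) (hx'm : x' < m) (hmy : m ≤ y) (hmy' : m ≤ y') :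
    f y - f x ≤ (f y' - f x') * ((y - x) / (m - x')) := by
  have hslope : slope f x y ≤ slope f x' m :=
    hf.slope_le_slope (Set.mem_univ _) (Set.mem_univ _) hx'x hmy hx'm hxy
  rw [slope_def_field, slope_def_field, div_le_div_iff₀ (sub_pos.2 hxy) (sub_pos.2 hx'm)]
    at hslope
  rw [mul_div_assoc', le_div_iff₀ (sub_pos.2 hx'm)]
  calc (f y - f x) * (m - x') ≤ (f m - f x') * (y - x) := hslope
    _ ≤ (f y' - f x') * (y - x) := by gcongr; exact hmono hmy'

end Slope

theorem div_add_le_div_add_of_mul_le_mul {𝕜 : Type*} [Field 𝕜] [LinearOrder 𝕜]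
    [IsStrictOrderedRing 𝕜] {a b c d : 𝕜} (hab : 0 < a + b) (hcd : 0 < c + d)
    (h : a * d ≤ c * b) : a / (a + b) ≤ c / (c + d) := by
  rw [div_le_div_iff₀ hab hcd]
  linear_combination h

/-- Sufficiency direction of Proposition 1 for a fixed pair of states:
if `a` and `b` are made steeper, the indifference belief weakly increases. -/
theorem steeper_increases_indifference_belief (u : ℝ → ℝ)
    (hu : ConcaveOn ℝ Set.univ u) (humono : StrictMono u)
    (a0 b0 a1 b1 ta0 tb0 ta1 tb1 : ℝ)
    (h1 : a0 > b0) (h2 : b1 > a1) (h3 : ta0 > tb0) (h4 : tb1 > ta1)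
    (h5 : tb0 ≤ b0) (h6 : ta1 ≥ a1)
    (h7 : (min ta0 a0 - tb0) / (a0 - b0) ≥ (tb1 - ta1) / (min tb1 b1 - a1)) :
    (u a0 - u b0) / ((u a0 - u b0) + (u b1 - u a1)) ≤
      (u ta0 - u tb0) / ((u ta0 - u tb0) + (u tb1 - u ta1)) := by
  have hX := sub_pos.2 (humono h1)
  have hY := sub_pos.2 (humono h2)
  have hXt := sub_pos.2 (humono h3)
  have hYt := sub_pos.2 (humono h4)
  have hm0 : tb0 < min ta0 a0 := lt_min h3 (h5.trans_lt h1)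
  have hm1 : a1 < min tb1 b1 := lt_min (h6.trans_lt h4) h2
  have hθ : u a0 - u b0 ≤ (u ta0 - u tb0) * ((a0 - b0) / (min ta0 a0 - tb0)) :=
    hu.sub_le_sub_mul_div humono.monotone h5 h1 hm0
      (min_le_right _ _) (min_le_left _ _)
  have hθ' : u tb1 - u ta1 ≤ (u b1 - u a1) * ((tb1 - ta1) / (min tb1 b1 - a1)) :=
    hu.sub_le_sub_mul_div humono.monotone h6 h4 hm1
      (min_le_left _ _) (min_le_right _ _)
  have hratio : (a0 - b0) / (min ta0 a0 - tb0) * ((tb1 - ta1) / (min tb1 b1 - a1)) ≤ 1 := by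
    rw [ge_iff_le, div_le_div_iff₀ (sub_pos.2 hm1) (sub_pos.2 h1)] at h7
    rw [div_mul_div_comm, div_le_one (mul_pos (sub_pos.2 hm0) (sub_pos.2 hm1))]
    linarith
  refine div_add_le_div_add_of_mul_le_mul (add_pos hX hY) (add_pos hXt hYt) ?_
  calc (u a0 - u b0) * (u tb1 - u ta1)
      ≤ ((u ta0 - u tb0) * ((a0 - b0) / (min ta0 a0 - tb0))) *
          ((u b1 - u a1) * ((tb1 - ta1) / (min tb1 b1 - a1))) :=
        mul_le_mul hθ hθ' hYt.le (hX.le.trans hθ)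
    _ = (u ta0 - u tb0) * (u b1 - u a1) *
          ((a0 - b0) / (min ta0 a0 - tb0) * ((tb1 - ta1) / (min tb1 b1 - a1))) := by ring
    _ ≤ (u ta0 - u tb0) * (u b1 - u a1) := mul_le_of_le_one_right (mul_pos hXt hY).le hratio
end

section
/- Let ≽ be a complete, transitive binary relation on ℝ^Θ that is strongly monotone (a ≫ b implies a ≻ b) and convex (a ≽ b implies λ·a + (1-λ)·b ≽ b for all λ ∈ [0,1]). Suppose a ≻ b, b ≻ λ·a + (1-λ)·b̂ pointwise-dominantly for some λ ∈ [0,1) (i.e., b ≫ λ·a + (1-λ)·b̂, or b = b̂), and â ≫ γ·a + (1-γ)·b̂ for some γ ∈ [0,1] (or â = a). Then a ≻ b̂ and â ≻ b̂. -/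
/-!
If `b̂ ≽ a`, convexity gives `λ a + (1 - λ) b̂ ≽ a`, and `b` dominates that mixture, so `b ≻ a`,
contradicting `a ≻ b`; hence `a ≻ b̂`. Convexity then gives `γ a + (1 - γ) b̂ ≽ b̂`, and `â`
dominates that mixture, so `â ≻ b̂`.
-/

section RegularPreference

variable {Θ : Type*} {R : (Θ → ℝ) → (Θ → ℝ) → Prop}

theorem strict_of_strict_of_rel (htrans : ∀ a b c, R a b → R b c → R a c)
    {x y z : Θ → ℝ} (hxy : R x y ∧ ¬ R y x) (hyz : R y z) : R x z ∧ ¬ R z x :=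
  ⟨htrans x y z hxy.1 hyz, fun hzx => hxy.2 (htrans y z x hyz hzx)⟩

theorem strict_of_dominates_of_rel (htrans : ∀ a b c, R a b → R b c → R a c)
    (hmono : ∀ a b, (∀ θ, a θ > b θ) → R a b ∧ ¬ R b a)
    {x y z : Θ → ℝ} (hdom : ∀ θ, x θ > y θ) (hyz : R y z) : R x z ∧ ¬ R z x :=
  strict_of_strict_of_rel htrans (hmono x y hdom) hyz

theorem strict_of_strict_of_dominates_mix (hcomplete : ∀ a b, R a b ∨ R b a)
    (htrans : ∀ a b c, R a b → R b c → R a c)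
    (hmono : ∀ a b, (∀ θ, a θ > b θ) → R a b ∧ ¬ R b a)
    (hconvex : ∀ a b, R a b → ∀ l : ℝ, 0 ≤ l → l ≤ 1 →
      R (fun θ => l * a θ + (1 - l) * b θ) b)
    {a b tb : Θ → ℝ} (hab : R a b ∧ ¬ R b a) {l : ℝ} (hl0 : 0 ≤ l) (hl1 : l ≤ 1)
    (hdom : ∀ θ, b θ > l * a θ + (1 - l) * tb θ) : R a tb ∧ ¬ R tb a := by
  have hnot : ¬ R tb a := by
    intro htba
    have hmix : R (fun θ => l * a θ + (1 - l) * tb θ) a := by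
      convert hconvex tb a htba (1 - l) (by linarith) (by linarith) using 1
      funext θ
      ring
    exact hab.2 (strict_of_dominates_of_rel htrans hmono hdom hmix).1
  exact ⟨(hcomplete a tb).resolve_right hnot, hnot⟩

theorem strict_of_dominates_mix_of_rel (htrans : ∀ a b c, R a b → R b c → R a c)
    (hmono : ∀ a b, (∀ θ, a θ > b θ) → R a b ∧ ¬ R b a)
    (hconvex : ∀ a b, R a b → ∀ l : ℝ, 0 ≤ l → l ≤ 1 →
      R (fun θ => l * a θ + (1 - l) * b θ) b)
    {a ta tb : Θ → ℝ} (hatb : R a tb) {g : ℝ} (hg0 : 0 ≤ g) (hg1 : g ≤ 1)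
    (hdom : ∀ θ, ta θ > g * a θ + (1 - g) * tb θ) : R ta tb ∧ ¬ R tb ta :=
  strict_of_dominates_of_rel htrans hmono hdom (hconvex a tb hatb g hg0 hg1)

end RegularPreference

/-- Proposition 3 (strict part): regular preferences and actions made commonly
steeper: if `a ≻ b` then `a ≻ b̂` and `â ≻ b̂`. -/
theorem regular_commonly_steeper_strict (Θ : Type*)
    (R : (Θ → ℝ) → (Θ → ℝ) → Prop)
    (hcomplete : ∀ a b, R a b ∨ R b a)
    (htrans : ∀ a b c, R a b → R b c → R a c)
    (hmono : ∀ a b, (∀ θ, a θ > b θ) → R a b ∧ ¬ R b a)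
    (hconvex : ∀ a b, R a b → ∀ l : ℝ, 0 ≤ l → l ≤ 1 →
      R (fun θ => l * a θ + (1 - l) * b θ) b)
    (a b ta tb : Θ → ℝ)
    (hab : R a b ∧ ¬ R b a)
    (hbstep : b = tb ∨ ∃ l : ℝ, 0 ≤ l ∧ l < 1 ∧
      ∀ θ, b θ > l * a θ + (1 - l) * tb θ)
    (hastep : ta = a ∨ ∃ g : ℝ, 0 ≤ g ∧ g ≤ 1 ∧
      ∀ θ, ta θ > g * a θ + (1 - g) * tb θ) :
    (R a tb ∧ ¬ R tb a) ∧ (R ta tb ∧ ¬ R tb ta) := by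
  have hatb : R a tb ∧ ¬ R tb a := by
    rcases hbstep with rfl | ⟨l, hl0, hl1, hdom⟩
    · exact hab
    · exact strict_of_strict_of_dominates_mix hcomplete htrans hmono hconvex hab hl0 hl1.le hdom
  refine ⟨hatb, ?_⟩
  rcases hastep with rfl | ⟨g, hg0, hg1, hdom⟩
  · exact hatb
  · exact strict_of_dominates_mix_of_rel htrans hmono hconvex hatb.1 hg0 hg1 hdom
end

section
/- Let ≽ be a complete, transitive, strongly monotone, convex preference relation on ℝ^Θ. Suppose a ∼ b (indifference), and (b = b̂ or b ≫ λ·a + (1-λ)·b̂ for some λ ∈ [0,1]), and (â = a or â ≫ γ·a + (1-γ)·b̂ for some γ ∈ [0,1]). Then â ≽ b̂. -/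
/-! If `a ≽ b̂` failed, completeness and convexity would give `λa + (1-λ)b̂ ≽ a ≽ b`,
contradicting `b ≫ λa + (1-λ)b̂` by strong monotonicity. Hence `a ≽ b̂`, and then
`â ≫ γa + (1-γ)b̂ ≽ b̂` by monotonicity and convexity. -/

section

variable {Θ : Type*} {R : (Θ → ℝ) → (Θ → ℝ) → Prop}

theorem rel_of_gt_mix
    (htrans : ∀ a b c, R a b → R b c → R a c)
    (hmono : ∀ a b, (∀ θ, a θ > b θ) → R a b ∧ ¬ R b a)
    (hconvex : ∀ a b, R a b → ∀ l : ℝ, 0 ≤ l → l ≤ 1 →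
      R (fun θ => l * a θ + (1 - l) * b θ) b)
    {x y z : Θ → ℝ} (hxy : R x y) {l : ℝ} (hl0 : 0 ≤ l) (hl1 : l ≤ 1)
    (hz : ∀ θ, z θ > l * x θ + (1 - l) * y θ) :
    R z y :=
  htrans _ _ _ (hmono _ _ hz).1 (hconvex x y hxy l hl0 hl1)

theorem rel_of_rel_of_gt_mix
    (hcomplete : ∀ a b, R a b ∨ R b a)
    (htrans : ∀ a b c, R a b → R b c → R a c)
    (hmono : ∀ a b, (∀ θ, a θ > b θ) → R a b ∧ ¬ R b a)
    (hconvex : ∀ a b, R a b → ∀ l : ℝ, 0 ≤ l → l ≤ 1 →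
      R (fun θ => l * a θ + (1 - l) * b θ) b)
    {x y z : Θ → ℝ} (hxz : R x z) {l : ℝ} (hl0 : 0 ≤ l) (hl1 : l ≤ 1)
    (hz : ∀ θ, z θ > l * x θ + (1 - l) * y θ) :
    R x y := by
  refine (hcomplete x y).resolve_right fun hyx => (hmono _ _ hz).2 ?_
  have hmix : R (fun θ => l * x θ + (1 - l) * y θ) x := by
    convert hconvex y x hyx (1 - l) (by linarith) (by linarith) using 2 with θ
    ring
  exact htrans _ _ _ hmix hxz

end

/-- Proposition 3 (indifference part): regular preferences and actions made
commonly steeper: if `a ∼ b` then `â ≽ b̂`. -/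
theorem regular_commonly_steeper_indiff (Θ : Type*)
    (R : (Θ → ℝ) → (Θ → ℝ) → Prop)
    (hcomplete : ∀ a b, R a b ∨ R b a)
    (htrans : ∀ a b c, R a b → R b c → R a c)
    (hmono : ∀ a b, (∀ θ, a θ > b θ) → R a b ∧ ¬ R b a)
    (hconvex : ∀ a b, R a b → ∀ l : ℝ, 0 ≤ l → l ≤ 1 →
      R (fun θ => l * a θ + (1 - l) * b θ) b)
    (a b ta tb : Θ → ℝ)
    (hab : R a b ∧ R b a)
    (hbstep : b = tb ∨ ∃ l : ℝ, 0 ≤ l ∧ l ≤ 1 ∧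
      ∀ θ, b θ > l * a θ + (1 - l) * tb θ)
    (hastep : ta = a ∨ ∃ g : ℝ, 0 ≤ g ∧ g ≤ 1 ∧
      ∀ θ, ta θ > g * a θ + (1 - g) * tb θ) :
    R ta tb := by
  have hatb : R a tb := by
    rcases hbstep with rfl | ⟨l, hl0, hl1, hb⟩
    · exact hab.1
    · exact rel_of_rel_of_gt_mix hcomplete htrans hmono hconvex hab.1 hl0 hl1 hb
  rcases hastep with rfl | ⟨g, hg0, hg1, ha⟩
  · exact hatb
  · exact rel_of_gt_mix htrans hmono hconvex hatb hg0 hg1 ha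
end

section
/- Fix reals with a_θ > b_θ, b_{θ'} > a_{θ'}, â_θ > b̂_θ, b̂_{θ'} > â_{θ'}, and suppose â_{θ'} < a_{θ'}. Define for ι ∈ (0,1) the utility u_ι(x) = x for x ≤ a_{θ'} and u_ι(x) = ι·x + (1-ι)·a_{θ'} for x > a_{θ'}. Suppose b_θ < a_θ ≤ a_{θ'} and b̂_θ < â_θ ≤ â_{θ'} < a_{θ'} < min{b_{θ'}, b̂_{θ'}}. Then for all sufficiently small ι > 0, the pre-transformation indifference belief (a_θ - b_θ)/((a_θ - b_θ) + ι·(b_{θ'} - a_{θ'})) strictly exceeds the post-transformation indifference belief (â_θ - b̂_θ)/((â_θ - b̂_θ) + (u_ι(b̂_{θ'}) - â_{θ'})). -/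
/-!
Write `A = a0 - b0`, `B = b1 - a1`, `C = ta0 - tb0`, `E = a1 - ta1`, all positive. Since the kinked
utility never falls below `min x a1`, the post-transformation gap `u_ι(tb1) - ta1` is at least `E`,
so the post-transformation belief is at most `C / (C + E) < 1`. The pre-transformation belief
`A / (A + ι B)` tends to `1`, and exceeds `C / (C + E)` exactly when `ι C B < A E`.
-/

noncomputable def kinkedUtility (k ι x : ℝ) : ℝ := if x ≤ k then x else ι * x + (1 - ι) * k

lemma min_le_kinkedUtility {ι : ℝ} (hι : 0 ≤ ι) (k x : ℝ) : min x k ≤ kinkedUtility k ι x := by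
  unfold kinkedUtility
  split_ifs with hxk
  · exact min_le_left x k
  · have : k ≤ ι * x + (1 - ι) * k := by nlinarith [not_le.1 hxk]
    exact (min_le_right x k).trans this

lemma div_add_lt_div_add_iff {a b c d : ℝ} (hab : 0 < a + b) (hcd : 0 < c + d) :
    a / (a + b) < c / (c + d) ↔ a * d < c * b := by
  rw [div_lt_div_iff₀ hab hcd]
  constructor <;> intro h <;> linarith

theorem case2_kinked_utility_general (a0 b0 a1 b1 ta0 tb0 ta1 tb1 : ℝ)
    (h5 : ta1 < a1)
    (h6 : b0 < a0)
    (h8 : tb0 < ta0)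
    (h10 : a1 < min b1 tb1) :
    ∃ ι₀ : ℝ, 0 < ι₀ ∧ ι₀ ≤ 1 ∧ ∀ ι : ℝ, 0 < ι → ι < ι₀ →
      (fun u : ℝ → ℝ =>
        (a0 - b0) / ((a0 - b0) + ι * (b1 - a1)) >
          (ta0 - tb0) / ((ta0 - tb0) + (u tb1 - ta1)))
        (fun x => if x ≤ a1 then x else ι * x + (1 - ι) * a1) := by
  obtain ⟨hb1, htb1⟩ := lt_min_iff.1 h10
  have hA : 0 < a0 - b0 := sub_pos.2 h6
  have hB : 0 < b1 - a1 := sub_pos.2 hb1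
  have hC : 0 < ta0 - tb0 := sub_pos.2 h8
  have hE : 0 < a1 - ta1 := sub_pos.2 h5
  refine ⟨min 1 ((a0 - b0) * (a1 - ta1) / ((ta0 - tb0) * (b1 - a1))),
    lt_min one_pos (by positivity), min_le_left _ _, fun ι hι hιlt => ?_⟩
  have hsmall : ι * ((ta0 - tb0) * (b1 - a1)) < (a0 - b0) * (a1 - ta1) :=
    (lt_div_iff₀ (by positivity)).1 (hιlt.trans_le (min_le_right _ _))
  have hu : a1 ≤ kinkedUtility a1 ι tb1 :=
    (min_eq_right htb1.le).ge.trans (min_le_kinkedUtility hι.le a1 tb1)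
  change (ta0 - tb0) / ((ta0 - tb0) + (kinkedUtility a1 ι tb1 - ta1))
    < (a0 - b0) / ((a0 - b0) + ι * (b1 - a1))
  calc (ta0 - tb0) / ((ta0 - tb0) + (kinkedUtility a1 ι tb1 - ta1))
      ≤ (ta0 - tb0) / ((ta0 - tb0) + (a1 - ta1)) :=
        div_le_div_of_nonneg_left hC.le (by positivity) (by linarith)
    _ < (a0 - b0) / ((a0 - b0) + ι * (b1 - a1)) :=
        (div_add_lt_div_add_iff (by positivity) (by positivity)).2 (by linarith)

/-- Case 2 of the necessity direction of Proposition 1: if the good-state payoff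
of the low action strictly decreases, the kinked utility with kink at `a1` makes
the pre-transformation indifference belief exceed the post one for small `ι`. -/
theorem case2_kinked_utility (a0 b0 a1 b1 ta0 tb0 ta1 tb1 : ℝ)
    (h1 : a0 > b0) (h2 : b1 > a1) (h3 : ta0 > tb0) (h4 : tb1 > ta1)
    (h5 : ta1 < a1)
    (h6 : b0 < a0) (h7 : a0 ≤ a1)
    (h8 : tb0 < ta0) (h9 : ta0 ≤ ta1)
    (h10 : a1 < min b1 tb1) :
    ∃ ι₀ : ℝ, 0 < ι₀ ∧ ι₀ ≤ 1 ∧ ∀ ι : ℝ, 0 < ι → ι < ι₀ →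
      (fun u : ℝ → ℝ =>
        (a0 - b0) / ((a0 - b0) + ι * (b1 - a1)) >
          (ta0 - tb0) / ((ta0 - tb0) + (u tb1 - ta1)))
        (fun x => if x ≤ a1 then x else ι * x + (1 - ι) * a1) :=
  case2_kinked_utility_general a0 b0 a1 b1 ta0 tb0 ta1 tb1 h5 h6 h8 h10
end
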